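/- Let a, b and n > 1 be positive integers, set a_m = r_b(n) + a·r_b(m-1) for 1 ≤ m ≤ n. Let L be the (n-1)×n integer matrix whose rows are: for 1 ≤ m ≤ n-2, the row b·e_m − (b+1)·e_{m+1} + e_{m+2}, and the last row (a+1)·e_1 + b·e_{n-1} − (b+1)·e_n. Then for every m ∈ {1,…,n}, the absolute value of the determinant of the (n-1)×(n-1) matrix obtained from L by deleting column m equals a_m; in particular, the set of absolute values of the maximal minors of L is {a_1, …, a_n}. -/

import Mathlib

/-- The ℓ-th repunit in base `b`: `r_b(ℓ) = ∑_{j=0}^{ℓ-1} b^j`, with `r_b(0) = 0`. -/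
def rep (b ℓ : ℕ) : ℕ := ∑ j ∈ Finset.range ℓ, b ^ j

/-- `a_m = r_b(n) + a · r_b(m-1)`. -/
def aseq (a b n m : ℕ) : ℕ := rep b n + a * rep b (m - 1)

/-- The `m`-th (1-indexed) standard basis vector of `ℤ^n`. -/
def eZ (n m : ℕ) : Fin n → ℤ := fun j => if (j : ℕ) + 1 = m then 1 else 0

/-- The `(n-1)×n` matrix `L`: for `1 ≤ m ≤ n-2` the `m`-th row is
`b·e_m − (b+1)·e_{m+1} + e_{m+2}`, and the last row is `(a+1)·e_1 + b·e_{n-1} − (b+1)·e_n`. -/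
def Lmat (a b n : ℕ) : Matrix (Fin (n - 1)) (Fin n) ℤ :=
  Matrix.of fun r =>
    if (r : ℕ) + 1 ≤ n - 2 then
      (b : ℤ) • eZ n ((r : ℕ) + 1) - ((b : ℤ) + 1) • eZ n ((r : ℕ) + 2) + eZ n ((r : ℕ) + 3)
    else
      ((a : ℤ) + 1) • eZ n 1 + (b : ℤ) • eZ n (n - 1) - ((b : ℤ) + 1) • eZ n n

/-- The strictly monotone embedding `Fin (n-1) → Fin n` avoiding `m`; composing with it
deletes the column `m`. -/
def delCol (n : ℕ) (m : Fin n) (j : Fin (n - 1)) : Fin n :=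
  if h : (j : ℕ) < (m : ℕ) then ⟨j, lt_trans h m.isLt⟩
  else ⟨(j : ℕ) + 1, by have := j.isLt; omega⟩

/-! Let `T` be the lower unitriangular Toeplitz matrix with entries `r_b(j + 1 - k)`. Repunits
satisfy `b r(s) - (b + 1) r(s + 1) + r(s + 2) = 0`, so right multiplication by `T` sends the first
`n - 2` rows of `L` to the unit vectors `e_3, …, e_n`. Border `L` below by the unit row `e_m`:
Laplace expansion along that row gives, up to sign, the minor of `L` without column `m`, while
after multiplication by `T` (determinant 1) only a `2 × 2` determinant in the first two columns of
the last two rows survives, and it equals `r_b(n) + a r_b(m - 1)`. -/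

open Matrix

theorem det_snoc_single {R : Type*} [CommRing R] {k : ℕ}
    (A : Matrix (Fin (k + 1)) (Fin (k + 2)) R) (m : Fin (k + 2)) :
    (of (Fin.snoc A (Pi.single m 1))).det
      = (-1) ^ (k + 1 + m : ℕ) * (A.submatrix id m.succAbove).det := by
  have hlast : Fin.snoc (α := fun _ => Fin (k + 2) → R) A (Pi.single m 1) (Fin.last (k + 1))
      = Pi.single m 1 := Fin.snoc_last (α := fun _ => Fin (k + 2) → R) _ _
  have hA : (of (Fin.snoc A (Pi.single m 1))).submatrix Fin.castSucc m.succAbove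
      = A.submatrix id m.succAbove := by
    ext i j; exact congrFun (Fin.snoc_castSucc (α := fun _ => Fin (k + 2) → R) _ _ i) _
  rw [det_succ_row _ (Fin.last _),
    Finset.sum_eq_single m (fun j _ hj => by simp [hlast, hj]) (by simp)]
  simp [hlast, Fin.succAbove_last, hA]

theorem det_of_rows_eq_single_succ_succ {R : Type*} [CommRing R] :
    ∀ {k : ℕ} (M : Matrix (Fin (k + 2)) (Fin (k + 2)) R),
      (∀ i : Fin k, M i.castSucc.castSucc = Pi.single i.succ.succ 1) →
      M.det = M (Fin.last k).castSucc 0 * M (Fin.last (k + 1)) 1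
        - M (Fin.last k).castSucc 1 * M (Fin.last (k + 1)) 0
  | 0, M, _ => by rw [det_fin_two]; rfl
  | k + 1, M, hM => by
    obtain ⟨p, hp⟩ : ∃ p : Fin (k + 3), p = (0 : Fin (k + 1)).succ.succ := ⟨_, rfl⟩
    have hrow : M 0 = Pi.single p 1 := by rw [hp]; exact hM 0
    have hminor := det_of_rows_eq_single_succ_succ (M.submatrix Fin.succ p.succAbove)
      fun i => by
        ext j
        have hi : p.succAbove i.succ.succ = i.succ.succ.succ := by
          rw [hp, Fin.succ_succAbove_succ, Fin.succ_succAbove_succ, Fin.succAbove_zero]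
        simp only [submatrix_apply, Fin.succ_castSucc, hM, Pi.single_apply, ← hi,
          Fin.succAbove_right_inj]
    have h0 : p.succAbove 0 = 0 := by rw [hp, Fin.succ_succAbove_zero]
    have h1 : p.succAbove 1 = 1 := by
      rw [hp, ← Fin.succ_zero_eq_one, Fin.succ_succAbove_succ, Fin.succ_succAbove_zero,
        Fin.succ_zero_eq_one]
    have h2 : (-1 : R) ^ (p : ℕ) = 1 := by simp only [hp, Fin.val_succ, Fin.val_zero]; norm_num
    rw [det_succ_row_zero, hrow, Finset.sum_eq_single p (fun j _ hj => by simp [hj]) (by simp),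
      hminor]
    simp only [Pi.single_eq_same, h2, one_mul, mul_one, submatrix_apply, h0, h1,
      Fin.succ_castSucc, Fin.succ_last]

lemma rep_zero (b : ℕ) : rep b 0 = 0 := rfl

lemma rep_succ (b t : ℕ) : rep b (t + 1) = b * rep b t + 1 := geom_sum_succ

lemma rep_recurrence (b s : ℕ) :
    (b : ℤ) * rep b s - (b + 1) * rep b (s + 1) + rep b (s + 2) = 0 := by
  simp only [rep_succ]; push_cast; ring

/-- Truncated subtraction makes the entries above the diagonal `rep b 0 = 0`. -/
def repToeplitz (b n : ℕ) : Matrix (Fin n) (Fin n) ℤ :=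
  of fun j k => rep b (j + 1 - k)

lemma det_repToeplitz (b n : ℕ) : (repToeplitz b n).det = 1 := by
  rw [det_of_isLowerTriangular]
  · simp [repToeplitz, rep_succ, rep_zero]
  · intro j k (hjk : j < k)
    simp [repToeplitz, Nat.sub_eq_zero_of_le (show (j : ℕ) + 1 ≤ k from hjk), rep_zero]

lemma Lmat_castSucc (a b k : ℕ) (i : Fin k) :
    Lmat a b (k + 2) i.castSucc = (b : ℤ) • Pi.single i.castSucc.castSucc 1
      - ((b : ℤ) + 1) • Pi.single i.succ.castSucc 1 + Pi.single i.succ.succ 1 := by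
  ext j
  simp only [Lmat, of_apply, Fin.val_castSucc, if_pos (show (i : ℕ) + 1 ≤ k + 2 - 2 by omega)]
  simp only [eZ, Pi.single_apply, Fin.ext_iff, Pi.add_apply, Pi.sub_apply, Pi.smul_apply,
    Fin.val_castSucc, Fin.val_succ]
  split_ifs <;> omega

lemma Lmat_last (a b k : ℕ) :
    Lmat a b (k + 2) (Fin.last k) = ((a : ℤ) + 1) • Pi.single 0 1
      + (b : ℤ) • Pi.single (Fin.last k).castSucc 1
      - ((b : ℤ) + 1) • Pi.single (Fin.last (k + 1)) 1 := by
  ext j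
  simp only [Lmat, of_apply, Fin.val_last, if_neg (show ¬ k + 1 ≤ k + 2 - 2 by omega)]
  simp only [eZ, Pi.single_apply, Fin.ext_iff, Pi.add_apply, Pi.sub_apply, Pi.smul_apply,
    Fin.val_castSucc, Fin.val_last, Fin.val_zero]
  split_ifs <;> omega

lemma Lmat_castSucc_vecMul_repToeplitz (a b k : ℕ) (i : Fin k) :
    Lmat a b (k + 2) i.castSucc ᵥ* repToeplitz b (k + 2) = Pi.single i.succ.succ 1 := by
  rw [Lmat_castSucc, add_vecMul, sub_vecMul, smul_vecMul, smul_vecMul, single_one_vecMul,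
    single_one_vecMul, single_one_vecMul]
  ext j
  simp only [repToeplitz, Pi.add_apply, Pi.sub_apply, Pi.smul_apply, row_apply, of_apply,
    smul_eq_mul, Pi.single_apply, Fin.ext_iff, Fin.val_castSucc, Fin.val_succ]
  rcases lt_trichotomy (j : ℕ) (i + 2) with h | h | h
  · obtain ⟨s, hs⟩ : ∃ s, (i : ℕ) + 1 = j + s := ⟨i + 1 - j, by omega⟩
    rw [if_neg h.ne, show (i : ℕ) + 1 - j = s by omega, show (i : ℕ) + 1 + 1 - j = s + 1 by omega,
      show (i : ℕ) + 1 + 1 + 1 - j = s + 2 by omega, rep_recurrence]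
  · simp [h, rep_succ, rep_zero]
  · simp [h.ne', Nat.sub_eq_zero_of_le (show (i : ℕ) + 1 + 1 + 1 ≤ j by omega),
      Nat.sub_eq_zero_of_le (show (i : ℕ) + 1 + 1 ≤ j by omega),
      Nat.sub_eq_zero_of_le (show (i : ℕ) + 1 ≤ j by omega), rep_zero]

lemma det_snoc_single_mul_repToeplitz (a b k : ℕ) (m : Fin (k + 2)) :
    (of (Fin.snoc (Lmat a b (k + 2)) (Pi.single m 1)) * repToeplitz b (k + 2)).det
      = rep b (k + 2) + a * rep b m := by
  have hrow : ∀ r : Fin (k + 1), (of (Fin.snoc (Lmat a b (k + 2)) (Pi.single m 1))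
      * repToeplitz b (k + 2)) r.castSucc = Lmat a b (k + 2) r ᵥ* repToeplitz b (k + 2) :=
    fun r => congrArg (· ᵥ* _) (Fin.snoc_castSucc (α := fun _ => Fin (k + 2) → ℤ) _ _ r)
  have hlast : (of (Fin.snoc (Lmat a b (k + 2)) (Pi.single m 1))
      * repToeplitz b (k + 2)) (Fin.last (k + 1)) = repToeplitz b (k + 2) m :=
    (congrArg (· ᵥ* _) (Fin.snoc_last (α := fun _ => Fin (k + 2) → ℤ) _ _)).trans
      (single_one_vecMul _ _)
  rw [det_of_rows_eq_single_succ_succ _ fun i => by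
      rw [hrow]; exact Lmat_castSucc_vecMul_repToeplitz a b k i,
    hrow, hlast, Lmat_last, sub_vecMul, add_vecMul, smul_vecMul, smul_vecMul, smul_vecMul,
    single_one_vecMul, single_one_vecMul, single_one_vecMul]
  simp only [repToeplitz, Pi.sub_apply, Pi.add_apply, Pi.smul_apply, smul_eq_mul, row_apply,
    of_apply, Fin.val_zero, Fin.val_one, Fin.val_castSucc, Fin.val_last, Nat.sub_zero,
    Nat.add_sub_cancel, rep_succ, rep_zero]
  push_cast
  ring

lemma delCol_eq_succAbove (k : ℕ) (m : Fin (k + 1)) : delCol (k + 1) m = m.succAbove := by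
  ext j
  simp only [delCol, Fin.succAbove, Fin.lt_def, Fin.val_castSucc]
  split_ifs <;> simp

lemma natAbs_det_Lmat_submatrix_delCol (a b k : ℕ) (m : Fin (k + 2)) :
    ((Lmat a b (k + 2)).submatrix id (delCol (k + 2) m)).det.natAbs
      = aseq a b (k + 2) (m + 1) := by
  have h : (rep b (k + 2) + a * rep b m : ℤ)
      = (-1) ^ (k + 1 + m : ℕ) * ((Lmat a b (k + 2)).submatrix id m.succAbove).det := by
    rw [← det_snoc_single_mul_repToeplitz, det_mul, det_repToeplitz, mul_one, det_snoc_single]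
  rw [delCol_eq_succAbove, aseq, Nat.add_sub_cancel,
    ← Int.natAbs_natCast (rep b (k + 2) + a * rep b m)]
  push_cast
  rw [h, Int.natAbs_mul, Int.natAbs_pow, Int.natAbs_neg, Int.natAbs_one, one_pow, one_mul]

lemma range_val_add_one (n : ℕ) : Set.range (fun m : Fin n => (m : ℕ) + 1) = Set.Icc 1 n := by
  ext x
  simp only [Set.mem_range, Set.mem_Icc, Fin.exists_iff]
  exact ⟨fun ⟨i, hi, hx⟩ => by omega, fun h => ⟨x - 1, by omega, by omega⟩⟩

theorem stmt15_general (a b n : ℕ) (hn : 1 < n) :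
    (∀ m : Fin n,
        ((Lmat a b n).submatrix id (delCol n m)).det.natAbs = aseq a b n ((m : ℕ) + 1)) ∧
      (Set.range fun m : Fin n => ((Lmat a b n).submatrix id (delCol n m)).det.natAbs) =
        aseq a b n '' Set.Icc 1 n := by
  obtain ⟨k, rfl⟩ : ∃ k, n = k + 2 := ⟨n - 2, by omega⟩
  refine ⟨natAbs_det_Lmat_submatrix_delCol a b k, ?_⟩
  simp_rw [natAbs_det_Lmat_submatrix_delCol]
  rw [← range_val_add_one, ← Set.range_comp]
  rfl

theorem stmt15 (a b n : ℕ) (ha : 0 < a) (hb : 0 < b) (hn : 1 < n) :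
    (∀ m : Fin n,
        ((Lmat a b n).submatrix id (delCol n m)).det.natAbs = aseq a b n ((m : ℕ) + 1)) ∧
      (Set.range fun m : Fin n => ((Lmat a b n).submatrix id (delCol n m)).det.natAbs) =
        aseq a b n '' Set.Icc 1 n :=
  stmt15_general a b n hn
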